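/- In the time-invariant misspecified Kalman setting, assume that for every t there is a deterministic d×d matrix F_t with E[v_t v_tᵀ | 𝔉_{t−1}] = F_t almost surely. Then for every t ≥ 1 the cross-covariance matrix Cov(v'_t, a_{t+1} − a'_{t+1}) := E[(v'_t − E v'_t)(a_{t+1} − a'_{t+1} − E(a_{t+1} − a'_{t+1}))ᵀ] satisfies the identity Cov(v'_t, a_{t+1} − a'_{t+1}) = F_t (T(K_t − K'_t))ᵀ + Z · Var(a_t − a'_t) · (T L'_t)ᵀ, where Var(a_t − a'_t) := E[(a_t − a'_t)(a_t − a'_t)ᵀ] − E[a_t − a'_t] E[a_t − a'_t]ᵀ. -/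

import Mathlib

open Matrix MeasureTheory ProbabilityTheory

/-!
Write `e = a_t - a'_t`. Then `v'_t = v_t + Z e` and
`a_{t+1} - a'_{t+1} = T(K_t - K'_t) v_t + T L'_t e`. The recursion makes `e` measurable with
respect to `𝔉_{t-1}`, while `E[v_t | 𝔉_{t-1}] = 0`; hence `v_t` and `e` are uncorrelated, and
expanding the covariance bilinearly leaves only `Cov(v_t, v_t) = F_t` and `Var(e)`.
-/

lemma MeasureTheory.MemLp.matrix_mulVec {Ω ι κ : Type*} [Fintype ι] [Fintype κ]
    {m0 : MeasurableSpace Ω} {μ : Measure Ω} {X : Ω → κ → ℝ} (hX : MemLp X 2 μ)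
    (A : Matrix ι κ ℝ) : MemLp (fun ω => A *ᵥ X ω) 2 μ :=
  (mulVecLin A).toContinuousLinearMap.comp_memLp' hX

lemma MeasureTheory.StronglyMeasurable.matrix_mulVec {Ω ι κ : Type*} [Fintype κ]
    {m : MeasurableSpace Ω} {X : Ω → κ → ℝ} (hX : StronglyMeasurable[m] X) (A : Matrix ι κ ℝ) :
    StronglyMeasurable[m] fun ω => A *ᵥ X ω :=
  (continuous_const.matrix_mulVec continuous_id).comp_stronglyMeasurable hX

lemma condExp_eval_ae_eq {Ω ι : Type*} [Fintype ι] {m m0 : MeasurableSpace Ω} {μ : Measure Ω}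
    {X : Ω → ι → ℝ} (hX : Integrable X μ) (i : ι) :
    μ[fun ω => X ω i | m] =ᵐ[μ] fun ω => μ[X | m] ω i :=
  ((ContinuousLinearMap.proj i).comp_condExp_comm hX).symm

lemma condExp_eval_ae_eq_zero {Ω ι : Type*} [Fintype ι] {m m0 : MeasurableSpace Ω}
    {μ : Measure Ω} {X : Ω → ι → ℝ} (hX : Integrable X μ) (hXm : μ[X | m] =ᵐ[μ] 0) (i : ι) :
    μ[fun ω => X ω i | m] =ᵐ[μ] fun _ => 0 := by
  filter_upwards [condExp_eval_ae_eq hX i, hXm] with ω h h0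
  rw [h, h0]
  rfl

lemma integral_eq_of_condExp_ae_eq_const {Ω : Type*} {m m0 : MeasurableSpace Ω} {μ : Measure Ω}
    [IsProbabilityMeasure μ] (hm : m ≤ m0) {f : Ω → ℝ} {c : ℝ}
    (hf : μ[f | m] =ᵐ[μ] fun _ => c) : ∫ ω, f ω ∂μ = c := by
  rw [← integral_condExp hm, integral_congr_ae hf, integral_const, probReal_univ, one_smul]

lemma condExp_sub_ae_eq_zero {Ω E : Type*} [NormedAddCommGroup E] [NormedSpace ℝ E]
    [CompleteSpace E] {m m0 : MeasurableSpace Ω} {μ : Measure Ω} (hm : m ≤ m0)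
    [SigmaFinite (μ.trim hm)] {f g : Ω → E} (hf : Integrable f μ) (hg : Integrable g μ)
    (hgm : StronglyMeasurable[m] g) (hfg : μ[f | m] =ᵐ[μ] g) : μ[f - g | m] =ᵐ[μ] 0 := by
  filter_upwards [condExp_sub hf hg m, hfg] with ω h h'
  simp [h, h', condExp_of_stronglyMeasurable hm hgm hg]

noncomputable def covMatrix {Ω ι κ : Type*} {m0 : MeasurableSpace Ω}
    (X : Ω → ι → ℝ) (Y : Ω → κ → ℝ) (μ : Measure Ω) : Matrix ι κ ℝ :=
  of fun i j => cov[fun ω => X ω i, fun ω => Y ω j; μ]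

section covMatrix

variable {Ω ι κ : Type*} {m0 : MeasurableSpace Ω} {μ : Measure Ω}

lemma covMatrix_transpose (X : Ω → ι → ℝ) (Y : Ω → κ → ℝ) :
    (covMatrix X Y μ)ᵀ = covMatrix Y X μ := by
  ext i j
  exact covariance_comm _ _

variable [Fintype ι] [Fintype κ] {X X' : Ω → ι → ℝ} {Y Y' : Ω → κ → ℝ}

lemma covMatrix_eq_sub [IsProbabilityMeasure μ] (hX : MemLp X 2 μ) (hY : MemLp Y 2 μ) :
    covMatrix X Y μ = of (fun i j => ∫ ω, X ω i * Y ω j ∂μ)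
      - of fun i j => (∫ ω, X ω i ∂μ) * ∫ ω, Y ω j ∂μ := by
  ext i j
  exact covariance_eq_sub (hX.eval i) (hY.eval j)

variable [IsFiniteMeasure μ]

lemma covMatrix_add_left (hX : MemLp X 2 μ) (hX' : MemLp X' 2 μ) (hY : MemLp Y 2 μ) :
    covMatrix (X + X') Y μ = covMatrix X Y μ + covMatrix X' Y μ := by
  ext i j
  exact covariance_add_left (hX.eval i) (hX'.eval i) (hY.eval j)

lemma covMatrix_add_right (hX : MemLp X 2 μ) (hY : MemLp Y 2 μ) (hY' : MemLp Y' 2 μ) :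
    covMatrix X (Y + Y') μ = covMatrix X Y μ + covMatrix X Y' μ := by
  rw [← covMatrix_transpose, covMatrix_add_left hY hY' hX, transpose_add, covMatrix_transpose,
    covMatrix_transpose]

lemma covMatrix_mulVec_left {n : Type*} (A : Matrix n ι ℝ) (hX : MemLp X 2 μ)
    (hY : MemLp Y 2 μ) : covMatrix (fun ω => A *ᵥ X ω) Y μ = A * covMatrix X Y μ := by
  ext i j
  simp only [covMatrix, of_apply, mul_apply, mulVec, dotProduct]
  rw [covariance_fun_sum_left (fun k => (hX.eval k).const_mul (A i k)) (hY.eval j)]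
  simp only [covariance_const_mul_left]

lemma covMatrix_mulVec_right {n : Type*} (B : Matrix n κ ℝ) (hX : MemLp X 2 μ)
    (hY : MemLp Y 2 μ) : covMatrix X (fun ω => B *ᵥ Y ω) μ = covMatrix X Y μ * Bᵀ := by
  rw [← covMatrix_transpose, covMatrix_mulVec_left B hY hX, transpose_mul, covMatrix_transpose]

lemma covMatrix_add_mulVec_of_covMatrix_eq_zero {n : Type*} [Fintype n] (A : Matrix ι κ ℝ)
    (B : Matrix n ι ℝ) (C : Matrix n κ ℝ) (hX : MemLp X 2 μ) (hY : MemLp Y 2 μ)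
    (hXY : covMatrix X Y μ = 0) :
    covMatrix (fun ω => X ω + A *ᵥ Y ω) (fun ω => B *ᵥ X ω + C *ᵥ Y ω) μ
      = covMatrix X X μ * Bᵀ + A * covMatrix Y Y μ * Cᵀ := by
  have hYX : covMatrix Y X μ = 0 := by rw [← covMatrix_transpose, hXY, transpose_zero]
  change covMatrix (X + fun ω => A *ᵥ Y ω) ((fun ω => B *ᵥ X ω) + fun ω => C *ᵥ Y ω) μ = _
  rw [covMatrix_add_left hX (hY.matrix_mulVec A)
      ((hX.matrix_mulVec B).add (hY.matrix_mulVec C)),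
    covMatrix_add_right hX (hX.matrix_mulVec B) (hY.matrix_mulVec C),
    covMatrix_add_right (hY.matrix_mulVec A) (hX.matrix_mulVec B) (hY.matrix_mulVec C),
    covMatrix_mulVec_right B hX hX, covMatrix_mulVec_right C hX hY, hXY,
    covMatrix_mulVec_left A hY (hX.matrix_mulVec B), covMatrix_mulVec_right B hY hX, hYX,
    covMatrix_mulVec_left A hY (hY.matrix_mulVec C), covMatrix_mulVec_right C hY hY]
  simp only [Matrix.zero_mul, Matrix.mul_zero, add_zero, zero_add, Matrix.mul_assoc]

end covMatrix

section condExp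

variable {Ω ι : Type*} [Fintype ι] {m m0 : MeasurableSpace Ω} {μ : Measure Ω}
  [IsProbabilityMeasure μ] {X : Ω → ι → ℝ}

lemma covMatrix_eq_zero_of_condExp_eq_zero {κ : Type*} [Fintype κ] (hm : m ≤ m0)
    {Y : Ω → κ → ℝ} (hX : MemLp X 2 μ) (hY : MemLp Y 2 μ) (hYm : StronglyMeasurable[m] Y)
    (hXm : μ[X | m] =ᵐ[μ] 0) : covMatrix X Y μ = 0 := by
  ext i j
  have hXi := condExp_eval_ae_eq_zero (hX.integrable one_le_two) hXm i
  have hXiYj : μ[fun ω => X ω i * Y ω j | m] =ᵐ[μ] fun _ => 0 := by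
    filter_upwards [condExp_mul_of_stronglyMeasurable_right
      ((continuous_apply j).comp_stronglyMeasurable hYm) ((hX.eval i).integrable_mul (hY.eval j))
      ((hX.eval i).integrable one_le_two), hXi] with ω h h0
    exact h.trans (by rw [Pi.mul_apply, h0, zero_mul])
  simp [covMatrix, covariance_eq_sub (hX.eval i) (hY.eval j),
    integral_eq_of_condExp_ae_eq_const hm hXi, integral_eq_of_condExp_ae_eq_const hm hXiYj]

lemma covMatrix_self_eq_of_condExp (hm : m ≤ m0) (hX : MemLp X 2 μ) (hXm : μ[X | m] =ᵐ[μ] 0)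
    (F : Matrix ι ι ℝ) (hF : ∀ i j, μ[fun ω => X ω i * X ω j | m] =ᵐ[μ] fun _ => F i j) :
    covMatrix X X μ = F := by
  have hmean : ∀ i, ∫ ω, X ω i ∂μ = 0 := fun i =>
    integral_eq_of_condExp_ae_eq_const hm (condExp_eval_ae_eq_zero (hX.integrable one_le_two) hXm i)
  ext i j
  simp [covMatrix_eq_sub hX hX, hmean, integral_eq_of_condExp_ae_eq_const hm (hF i j)]

end condExp

lemma stronglyMeasurable_kalmanState {Ω ι κ : Type*} [Fintype ι] [Fintype κ]
    {m0 : MeasurableSpace Ω} (ℱ : Filtration ℕ m0) (Z : Matrix ι κ ℝ) (T : Matrix κ κ ℝ)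
    (K : ℕ → Matrix κ ι ℝ) {y : ℕ → Ω → ι → ℝ} (hy : ∀ t, StronglyMeasurable[ℱ t] (y t))
    {a : ℕ → Ω → κ → ℝ} {a₁ : κ → ℝ} (ha1 : ∀ ω, a 1 ω = a₁)
    (ha : ∀ t, 1 ≤ t → ∀ ω, a (t + 1) ω = T *ᵥ a t ω + T *ᵥ (K t *ᵥ (y t ω - Z *ᵥ a t ω))) :
    ∀ t, 1 ≤ t → StronglyMeasurable[ℱ (t - 1)] (a t) := by
  intro t ht
  induction t, ht using Nat.le_induction with
  | base => simpa [funext ha1] using stronglyMeasurable_const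
  | succ n hn ih =>
    have han : StronglyMeasurable[ℱ n] (a n) := ih.mono (ℱ.mono (Nat.sub_le n 1))
    rw [Nat.add_sub_cancel, funext (ha n hn)]
    exact (han.matrix_mulVec T).add
      ((((hy n).sub (han.matrix_mulVec Z)).matrix_mulVec (K n)).matrix_mulVec T)

theorem cov_misspecified_error_state_diff_general
    {Ω : Type*} {m0 : MeasurableSpace Ω} (μ : Measure Ω) [IsProbabilityMeasure μ]
    (ℱ : Filtration ℕ m0)
    {d p : ℕ}
    (Z : Matrix (Fin d) (Fin p) ℝ) (T : Matrix (Fin p) (Fin p) ℝ)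
    (K K' : ℕ → Matrix (Fin p) (Fin d) ℝ)
    (L' : ℕ → Matrix (Fin p) (Fin p) ℝ)
    (hL' : ∀ t, L' t = 1 - K' t * Z)
    (y : ℕ → Ω → Fin d → ℝ)
    (hy_meas : ∀ t, StronglyMeasurable[ℱ t] (y t))
    (hy_L2 : ∀ t, MemLp (y t) 2 μ)
    (a a' : ℕ → Ω → Fin p → ℝ)
    (a₁ a₁' : Fin p → ℝ)
    (ha1 : ∀ ω, a 1 ω = a₁) (ha1' : ∀ ω, a' 1 ω = a₁')
    (ha : ∀ t, 1 ≤ t → ∀ ω,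
      a (t + 1) ω = T.mulVec (a t ω) + T.mulVec ((K t).mulVec (y t ω - Z.mulVec (a t ω))))
    (ha' : ∀ t, 1 ≤ t → ∀ ω,
      a' (t + 1) ω
        = T.mulVec (a' t ω) + T.mulVec ((K' t).mulVec (y t ω - Z.mulVec (a' t ω))))
    (ha_L2 : ∀ t, MemLp (a t) 2 μ) (ha'_L2 : ∀ t, MemLp (a' t) 2 μ)
    (v v' : ℕ → Ω → Fin d → ℝ)
    (hv : ∀ t ω, v t ω = y t ω - Z.mulVec (a t ω))
    (hv' : ∀ t ω, v' t ω = y t ω - Z.mulVec (a' t ω))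
    (hcond : ∀ t, 1 ≤ t → μ[y t | ℱ (t - 1)] =ᵐ[μ] fun ω => Z.mulVec (a t ω))
    (F : ℕ → Matrix (Fin d) (Fin d) ℝ)
    (hF : ∀ t, 1 ≤ t → ∀ i j,
      μ[fun ω => v t ω i * v t ω j | ℱ (t - 1)] =ᵐ[μ] fun _ => F t i j) :
    ∀ t, 1 ≤ t →
      (Matrix.of fun i j =>
          ∫ ω, (v' t ω i - ∫ ω', v' t ω' i ∂μ)
            * ((a (t + 1) ω j - a' (t + 1) ω j)
              - ∫ ω', (a (t + 1) ω' j - a' (t + 1) ω' j) ∂μ) ∂μ)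
      = F t * (T * (K t - K' t))ᵀ
        + Z * ((Matrix.of fun i j => ∫ ω, (a t ω i - a' t ω i) * (a t ω j - a' t ω j) ∂μ)
            - Matrix.of fun i j =>
              (∫ ω, (a t ω i - a' t ω i) ∂μ) * ∫ ω, (a t ω j - a' t ω j) ∂μ)
          * (T * L' t)ᵀ := by
  intro t ht
  set e := fun ω => a t ω - a' t ω
  have he : MemLp e 2 μ := (ha_L2 t).sub (ha'_L2 t)
  have ha_meas := stronglyMeasurable_kalmanState ℱ Z T K hy_meas ha1 ha t ht
  have he_meas : StronglyMeasurable[ℱ (t - 1)] e :=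
    ha_meas.sub (stronglyMeasurable_kalmanState ℱ Z T K' hy_meas ha1' ha' t ht)
  have hv_eq : v t = y t - fun ω => Z *ᵥ a t ω := funext (hv t)
  have hv_mem : MemLp (v t) 2 μ := hv_eq ▸ (hy_L2 t).sub ((ha_L2 t).matrix_mulVec Z)
  have hv_cond : μ[v t | ℱ (t - 1)] =ᵐ[μ] 0 := hv_eq ▸ condExp_sub_ae_eq_zero (ℱ.le _)
    ((hy_L2 t).integrable one_le_two) (((ha_L2 t).matrix_mulVec Z).integrable one_le_two)
    (ha_meas.matrix_mulVec Z) (hcond t ht)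
  have hv'_eq : v' t = fun ω => v t ω + Z *ᵥ e ω := by
    funext ω
    rw [hv' t ω, hv t ω, mulVec_sub]
    abel
  have hstate : (fun ω => a (t + 1) ω - a' (t + 1) ω)
      = fun ω => (T * (K t - K' t)) *ᵥ v t ω + (T * L' t) *ᵥ e ω := by
    funext ω
    rw [ha t ht ω, ha' t ht ω, hL', hv t ω]
    simp only [e, ← mulVec_mulVec, sub_mulVec, one_mulVec, mulVec_sub]
    abel
  have hcov := covMatrix_add_mulVec_of_covMatrix_eq_zero Z (T * (K t - K' t)) (T * L' t)
    hv_mem he (covMatrix_eq_zero_of_condExp_eq_zero (ℱ.le _) hv_mem he he_meas hv_cond)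
  rw [← hv'_eq, ← hstate, covMatrix_self_eq_of_condExp (ℱ.le _) hv_mem hv_cond (F t) (hF t ht),
    covMatrix_eq_sub he he] at hcov
  -- the left-hand side of the goal is `covMatrix (v' t) (fun ω => a (t + 1) ω - a' (t + 1) ω) μ`
  exact hcov

/-- In the time-invariant misspecified Kalman setting, with deterministic
`F_t = E[v_t v_tᵀ | 𝔉_{t−1}]`, the cross-covariance matrix satisfies
`Cov(v'_t, a_{t+1} − a'_{t+1}) = F_t (T(K_t − K'_t))ᵀ + Z Var(a_t − a'_t) (T L'_t)ᵀ`. -/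
theorem cov_misspecified_error_state_diff
    {Ω : Type*} {m0 : MeasurableSpace Ω} (μ : Measure Ω) [IsProbabilityMeasure μ]
    (ℱ : Filtration ℕ m0) (hℱ0 : ℱ 0 = ⊥)
    {d p : ℕ}
    (Z : Matrix (Fin d) (Fin p) ℝ) (T : Matrix (Fin p) (Fin p) ℝ)
    (K K' : ℕ → Matrix (Fin p) (Fin d) ℝ)
    (L' : ℕ → Matrix (Fin p) (Fin p) ℝ)
    (hL' : ∀ t, L' t = 1 - K' t * Z)
    (y : ℕ → Ω → Fin d → ℝ)
    (hy_meas : ∀ t, StronglyMeasurable[ℱ t] (y t))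
    (hy_L2 : ∀ t, MemLp (y t) 2 μ)
    (a a' : ℕ → Ω → Fin p → ℝ)
    (a₁ a₁' : Fin p → ℝ)
    (ha1 : ∀ ω, a 1 ω = a₁) (ha1' : ∀ ω, a' 1 ω = a₁')
    (ha : ∀ t, 1 ≤ t → ∀ ω,
      a (t + 1) ω = T.mulVec (a t ω) + T.mulVec ((K t).mulVec (y t ω - Z.mulVec (a t ω))))
    (ha' : ∀ t, 1 ≤ t → ∀ ω,
      a' (t + 1) ω
        = T.mulVec (a' t ω) + T.mulVec ((K' t).mulVec (y t ω - Z.mulVec (a' t ω))))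
    (ha_L2 : ∀ t, MemLp (a t) 2 μ) (ha'_L2 : ∀ t, MemLp (a' t) 2 μ)
    (v v' : ℕ → Ω → Fin d → ℝ)
    (hv : ∀ t ω, v t ω = y t ω - Z.mulVec (a t ω))
    (hv' : ∀ t ω, v' t ω = y t ω - Z.mulVec (a' t ω))
    (hcond : ∀ t, 1 ≤ t → μ[y t | ℱ (t - 1)] =ᵐ[μ] fun ω => Z.mulVec (a t ω))
    (F : ℕ → Matrix (Fin d) (Fin d) ℝ)
    (hF : ∀ t, 1 ≤ t → ∀ i j,
      μ[fun ω => v t ω i * v t ω j | ℱ (t - 1)] =ᵐ[μ] fun _ => F t i j) :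
    ∀ t, 1 ≤ t →
      (Matrix.of fun i j =>
          ∫ ω, (v' t ω i - ∫ ω', v' t ω' i ∂μ)
            * ((a (t + 1) ω j - a' (t + 1) ω j)
              - ∫ ω', (a (t + 1) ω' j - a' (t + 1) ω' j) ∂μ) ∂μ)
      = F t * (T * (K t - K' t))ᵀ
        + Z * ((Matrix.of fun i j => ∫ ω, (a t ω i - a' t ω i) * (a t ω j - a' t ω j) ∂μ)
            - Matrix.of fun i j =>
              (∫ ω, (a t ω i - a' t ω i) ∂μ) * ∫ ω, (a t ω j - a' t ω j) ∂μ)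
          * (T * L' t)ᵀ :=
  cov_misspecified_error_state_diff_general μ ℱ Z T K K' L' hL' y hy_meas hy_L2 a a' a₁ a₁' ha1 ha1'
    ha ha' ha_L2 ha'_L2 v v' hv hv' hcond F hF
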